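/- For any graph G with Laplacian L₁ and k-token graph Laplacian L_k, L₁ = (1/C(n-2,k-1))·Bᵀ·L_k·B, where B is the (n,k)-binomial matrix. -/

import Mathlib

open Finset Matrix

/-- The `k`-token graph of `G`: vertices are the `k`-subsets of `V`, two being adjacent
iff their symmetric difference is a pair `{a,b}` with `a ∈ A`, `b ∈ B`, `G.Adj a b`. -/
def tokenGraph {V : Type*} [DecidableEq V] (G : SimpleGraph V) (k : ℕ) :
    SimpleGraph {s : Finset V // s.card = k} where
  Adj A B := ∃ a b, a ∈ A.1 ∧ b ∈ B.1 ∧ G.Adj a b ∧ symmDiff A.1 B.1 = {a, b}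
  symm := by
    constructor
    rintro A B ⟨a, b, ha, hb, hab, hd⟩
    exact ⟨b, a, hb, ha, hab.symm, by rw [symmDiff_comm, hd, Finset.pair_comm]⟩
  loopless := by
    constructor
    rintro A ⟨a, b, ha, hb, hab, hd⟩
    rw [symmDiff_self] at hd
    exact (Finset.insert_ne_empty a {b}) hd.symm

noncomputable instance tokenGraph.instDecidableRelAdj {V : Type*} [DecidableEq V]
    (G : SimpleGraph V) (k : ℕ) : DecidableRel (tokenGraph G k).Adj :=
  Classical.decRel _

/-- The `(n,k)`-binomial matrix: rows are characteristic vectors of the `k`-subsets. -/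
def binMatrix (V : Type*) [DecidableEq V] (k : ℕ) :
    Matrix {s : Finset V // s.card = k} V ℝ :=
  fun A j => if j ∈ A.1 then 1 else 0

/-! Compare both sides as bilinear forms, using `2 xᵀ L y = ∑_{i ~ j} (x i - x j) (y i - y j)`
over ordered adjacent pairs. Since `(B x) A = ∑_{a ∈ A} x a`, along an edge `A ~ A - a + b` of the
token graph `B x` changes by `x a - x b`, and every ordered edge `(a, b)` of `G` arises in this way
from exactly the `C(n-2, k-1)` sets `A` with `a ∈ A`, `b ∉ A`. -/

namespace SimpleGraph

variable {W R : Type*} [Fintype W] [DecidableEq W] (H : SimpleGraph W) [DecidableRel H.Adj]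

theorem lapMatrix_mulVec_apply_eq_sum [NonAssocRing R] (y : W → R) (i : W) :
    (H.lapMatrix R *ᵥ y) i = ∑ j, if H.Adj i j then y i - y j else 0 := by
  rw [lapMatrix_mulVec_apply, degree_eq_sum_if_adj, sum_mul, neighborFinset_eq_filter,
    sum_filter, ← sum_sub_distrib]
  refine sum_congr rfl fun j _ => ?_
  split_ifs <;> simp

theorem two_mul_dotProduct_lapMatrix_mulVec [CommRing R] (x y : W → R) :
    2 * (x ⬝ᵥ (H.lapMatrix R *ᵥ y)) =
      ∑ i, ∑ j, if H.Adj i j then (x i - x j) * (y i - y j) else 0 := by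
  have hswap : ∑ i, ∑ j, (if H.Adj i j then x j * (y i - y j) else 0) =
      -∑ i, ∑ j, if H.Adj i j then x i * (y i - y j) else 0 := by
    rw [sum_comm, ← sum_neg_distrib]
    refine sum_congr rfl fun i _ => ?_
    rw [← sum_neg_distrib]
    refine sum_congr rfl fun j _ => ?_
    by_cases h : H.Adj i j <;> simp [h, H.adj_comm j i]; ring
  calc 2 * (x ⬝ᵥ (H.lapMatrix R *ᵥ y))
      = (∑ i, ∑ j, if H.Adj i j then x i * (y i - y j) else 0) -
          ∑ i, ∑ j, if H.Adj i j then x j * (y i - y j) else 0 := by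
        simp_rw [hswap, sub_neg_eq_add, ← two_mul, dotProduct, lapMatrix_mulVec_apply_eq_sum,
          mul_sum, mul_ite, mul_zero]
    _ = _ := by
        simp_rw [← sum_sub_distrib]
        refine sum_congr rfl fun i _ => sum_congr rfl fun j _ => ?_
        split_ifs <;> ring

end SimpleGraph

namespace Finset

variable {V : Type*} [DecidableEq V] {A : Finset V} {a b : V}

theorem sdiff_insert_erase (ha : a ∈ A) (hb : b ∉ A) : A \ insert b (A.erase a) = {a} := by
  ext x; grind

theorem insert_erase_sdiff (hb : b ∉ A) : insert b (A.erase a) \ A = {b} := by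
  ext x; grind

theorem symmDiff_insert_erase (ha : a ∈ A) (hb : b ∉ A) :
    symmDiff A (insert b (A.erase a)) = {a, b} := by
  rw [symmDiff_def, sup_eq_union, sdiff_insert_erase ha hb, insert_erase_sdiff hb, insert_eq]

theorem card_insert_erase (ha : a ∈ A) (hb : b ∉ A) : (insert b (A.erase a)).card = A.card := by
  rw [card_insert_of_notMem fun h => hb (mem_of_mem_erase h), card_erase_add_one ha]

theorem sum_sub_sum_insert_erase {M : Type*} [AddCommGroup M] (f : V → M) (ha : a ∈ A)
    (hb : b ∉ A) : ∑ x ∈ A, f x - ∑ x ∈ insert b (A.erase a), f x = f a - f b := by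
  rw [sum_insert fun h => hb (mem_of_mem_erase h), ← add_sum_erase A f ha]
  abel

end Finset

section TokenGraph

variable {V : Type*} [DecidableEq V] {G : SimpleGraph V} {k : ℕ}

theorem tokenGraph_adj_iff {A B : {s : Finset V // s.card = k}} :
    (tokenGraph G k).Adj A B ↔
      ∃ a b, a ∈ A.1 ∧ b ∉ A.1 ∧ G.Adj a b ∧ B.1 = insert b (A.1.erase a) := by
  constructor
  · rintro ⟨a, b, ha, hb, hab, hd⟩
    have hx := Finset.ext_iff.mp hd
    simp only [mem_symmDiff, mem_insert, mem_singleton] at hx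
    refine ⟨a, b, ha, fun hbA => ?_, hab, ?_⟩
    · have := hx b; tauto
    · ext x; have := hx x; simp only [mem_insert, mem_erase]; grind
  · rintro ⟨a, b, ha, hb, hab, hB⟩
    exact ⟨a, b, ha, hB ▸ mem_insert_self b _, hab, hB ▸ symmDiff_insert_erase ha hb⟩

variable [Fintype V] [DecidableRel G.Adj]

theorem sum_tokenGraph_adj {M : Type*} [AddCommMonoid M] (A : {s : Finset V // s.card = k})
    (φ : Finset V → M) :
    ∑ B, (if (tokenGraph G k).Adj A B then φ B.1 else 0) =
      ∑ p : V × V, if p.1 ∈ A.1 ∧ p.2 ∉ A.1 ∧ G.Adj p.1 p.2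
        then φ (insert p.2 (A.1.erase p.1)) else 0 := by
  rw [← sum_filter, ← sum_filter]
  symm
  refine sum_bij (fun p hp => ⟨insert p.2 (A.1.erase p.1), ?_⟩) ?_ ?_ ?_ (fun _ _ => rfl)
  · obtain ⟨-, ha, hb, -⟩ := mem_filter.1 hp
    rw [card_insert_erase ha hb, A.2]
  · rintro ⟨a, b⟩ hp
    obtain ⟨-, ha, hb, hab⟩ := mem_filter.1 hp
    exact mem_filter.2 ⟨mem_univ _, tokenGraph_adj_iff.2 ⟨a, b, ha, hb, hab, rfl⟩⟩
  · rintro ⟨a, b⟩ hp ⟨a', b'⟩ hp' h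
    obtain ⟨-, ha, hb, -⟩ := mem_filter.1 hp
    obtain ⟨-, ha', hb', -⟩ := mem_filter.1 hp'
    have h : insert b (A.1.erase a) = insert b' (A.1.erase a') := congrArg Subtype.val h
    have hda := sdiff_insert_erase ha hb
    have hdb := insert_erase_sdiff (a := a) hb
    rw [h, sdiff_insert_erase ha' hb', singleton_inj] at hda
    rw [h, insert_erase_sdiff hb', singleton_inj] at hdb
    exact Prod.ext hda.symm hdb.symm
  · intro B hB
    obtain ⟨a, b, ha, hb, hab, hB⟩ := tokenGraph_adj_iff.1 (mem_filter.1 hB).2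
    exact ⟨(a, b), mem_filter.2 ⟨mem_univ _, ha, hb, hab⟩, Subtype.ext hB.symm⟩

theorem card_filter_mem_and_notMem (hk : 1 ≤ k) {a b : V} (hab : a ≠ b) :
    (univ.filter fun A : {s : Finset V // s.card = k} => a ∈ A.1 ∧ b ∉ A.1).card =
      (Fintype.card V - 2).choose (k - 1) := by
  have hcard : ((univ.erase a).erase b).card = Fintype.card V - 2 := by
    rw [card_erase_of_mem (mem_erase.2 ⟨hab.symm, mem_univ b⟩), card_erase_of_mem (mem_univ a),
      card_univ, Nat.sub_sub]
  rw [← hcard, ← card_powersetCard]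
  refine card_bij' (fun A _ => A.1.erase a) (fun t ht => ⟨insert a t, ?_⟩) ?_ ?_ ?_ ?_
  · obtain ⟨hsub, ht⟩ := mem_powersetCard.1 ht
    rw [card_insert_of_notMem fun h => by simpa using hsub h, ht]
    omega
  · intro A hA
    obtain ⟨-, ha, hb⟩ := mem_filter.1 hA
    refine mem_powersetCard.2 ⟨fun x hx => ?_, by rw [card_erase_of_mem ha, A.2]⟩
    grind
  · intro t ht
    obtain ⟨hsub, -⟩ := mem_powersetCard.1 ht
    refine mem_filter.2 ⟨mem_univ _, mem_insert_self a t, fun h => ?_⟩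
    grind
  · intro A hA
    exact Subtype.ext (insert_erase (mem_filter.1 hA).2.1)
  · intro t ht
    exact erase_insert fun h => by simpa using (mem_powersetCard.1 ht).1 h

end TokenGraph

section BinMatrix

variable {V : Type*} [Fintype V] [DecidableEq V] {G : SimpleGraph V} [DecidableRel G.Adj]
  {k : ℕ}

theorem binMatrix_mulVec_apply (y : V → ℝ) (A : {s : Finset V // s.card = k}) :
    (binMatrix V k *ᵥ y) A = ∑ j ∈ A.1, y j := by
  simp [mulVec, dotProduct, binMatrix]

theorem dotProduct_tokenGraph_lapMatrix_mulVec_binMatrix (hk : 1 ≤ k) (x y : V → ℝ) :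
    (binMatrix V k *ᵥ x) ⬝ᵥ ((tokenGraph G k).lapMatrix ℝ *ᵥ (binMatrix V k *ᵥ y)) =
      (Fintype.card V - 2).choose (k - 1) * (x ⬝ᵥ (G.lapMatrix ℝ *ᵥ y)) := by
  refine mul_left_cancel₀ (two_ne_zero' ℝ) ?_
  rw [mul_left_comm, SimpleGraph.two_mul_dotProduct_lapMatrix_mulVec,
    SimpleGraph.two_mul_dotProduct_lapMatrix_mulVec]
  simp_rw [binMatrix_mulVec_apply]
  calc ∑ A, ∑ B, (if (tokenGraph G k).Adj A B then
          (∑ j ∈ A.1, x j - ∑ j ∈ B.1, x j) * (∑ j ∈ A.1, y j - ∑ j ∈ B.1, y j) else 0)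
      = ∑ A : {s : Finset V // s.card = k}, ∑ p : V × V,
          if p.1 ∈ A.1 ∧ p.2 ∉ A.1 ∧ G.Adj p.1 p.2
            then (x p.1 - x p.2) * (y p.1 - y p.2) else 0 := by
        refine sum_congr rfl fun A _ => ?_
        rw [sum_tokenGraph_adj A
          fun s => (∑ j ∈ A.1, x j - ∑ j ∈ s, x j) * (∑ j ∈ A.1, y j - ∑ j ∈ s, y j)]
        refine sum_congr rfl fun p _ => ?_
        split_ifs with h
        · rw [sum_sub_sum_insert_erase x h.1 h.2.1, sum_sub_sum_insert_erase y h.1 h.2.1]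
        · rfl
    _ = ∑ p : V × V, ∑ A : {s : Finset V // s.card = k},
          if p.1 ∈ A.1 ∧ p.2 ∉ A.1 ∧ G.Adj p.1 p.2
            then (x p.1 - x p.2) * (y p.1 - y p.2) else 0 := sum_comm
    _ = ∑ p : V × V, if G.Adj p.1 p.2 then
          ((Fintype.card V - 2).choose (k - 1) : ℝ) * ((x p.1 - x p.2) * (y p.1 - y p.2))
            else 0 := by
        refine sum_congr rfl fun p _ => ?_
        split_ifs with hadj
        · simp only [hadj, and_true]
          rw [← sum_filter, sum_const, card_filter_mem_and_notMem hk (G.ne_of_adj hadj),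
            nsmul_eq_mul]
        · simp [hadj]
    _ = _ := by
        simp_rw [Fintype.sum_prod_type, mul_sum, mul_ite, mul_zero]

theorem binMatrix_transpose_mul_lapMatrix_mul_binMatrix (hk : 1 ≤ k) :
    (binMatrix V k)ᵀ * (tokenGraph G k).lapMatrix ℝ * binMatrix V k =
      ((Fintype.card V - 2).choose (k - 1) : ℝ) • G.lapMatrix ℝ := by
  refine ext_iff_mulVec.2 fun y => dotProduct_eq_iff.1 fun x => ?_
  rw [dotProduct_comm, dotProduct_comm _ x, ← mulVec_mulVec, ← mulVec_mulVec,
    dotProduct_mulVec, vecMul_transpose, smul_mulVec, dotProduct_smul, smul_eq_mul,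
    dotProduct_tokenGraph_lapMatrix_mulVec_binMatrix hk]

end BinMatrix

theorem lap_eq_binMatrix_conj {V : Type*} [Fintype V] [DecidableEq V]
    (G : SimpleGraph V) [DecidableRel G.Adj] (n k : ℕ) (hn : Fintype.card V = n)
    (hk1 : 1 ≤ k) (hk : k ≤ n - 1) :
    G.lapMatrix ℝ =
      (1 / ((n - 2).choose (k - 1) : ℝ)) •
        ((binMatrix V k)ᵀ * (tokenGraph G k).lapMatrix ℝ * binMatrix V k) := by
  subst hn
  have hC : ((Fintype.card V - 2).choose (k - 1) : ℝ) ≠ 0 :=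
    Nat.cast_ne_zero.2 (Nat.choose_pos (by omega)).ne'
  rw [binMatrix_transpose_mul_lapMatrix_mul_binMatrix hk1, smul_smul, one_div,
    inv_mul_cancel₀ hC, one_smul]
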